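/- In the setting of the GF(v) construction of Theorem 'POTB2new' (v = 2f+1 an odd prime power, two factors with levels V ∪ {∞}, 2v blocks of size f+1 developed from B₀ and B₁), the matrix A = M₁B·M₂Bᵀ equals (f+1)(J − I). Combined with M₁₂ = J − I, this shows the plan is orthogonal through the block factor: M₁B·M₂Bᵀ = (f+1)·M₁₂. -/

import Mathlib

open Finset

/-- Level-vs-block incidence: number of runs in block `j` where factor `i` has level `p`. -/
def MB {B R I L : Type*} [Fintype R] [DecidableEq L]
    (plan : B → R → I → L) (i : I) (p : L) (j : B) : ℕ :=
  (Finset.univ.filter fun t : R => plan j t i = p).card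

/-- Factor-vs-factor incidence: number of runs where factor `i` is at level `p`
and factor `i'` at level `q`. -/
def Mff {B R I L : Type*} [Fintype B] [Fintype R] [DecidableEq L]
    (plan : B → R → I → L) (i i' : I) (p q : L) : ℕ :=
  (Finset.univ.filter fun r : B × R => plan r.1 r.2 i = p ∧ plan r.1 r.2 i' = q).card

/-- The two initial blocks `B₀`, `B₁` of Theorem `POTB2new`: `init17 F f α i t fac` is
the level (in `V ∪ {∞}`, with `∞ = none`) of factor `fac` in run `t` of block `Bᵢ`;
`β = α²`, and `B₁` depends on the parity of `f`. -/
def init17 (F : Type*) [Field F] (f : ℕ) (α : Fˣ) (i : Fin 2) (t : Fin (f + 1))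
    (fac : Fin 2) : Option F :=
  let β : F := (α : F) ^ 2
  if i = 0 then
    (if fac = 0 then (if t.val = 0 then none else some (β ^ (t.val - 1)))
     else (if t.val = 0 then some 0 else some ((α : F) * β ^ (t.val - 1))))
  else
    if Even f then
      (if fac = 0 then (if t.val = 0 then some 0 else some (β ^ (t.val - 1)))
       else (if t.val = 0 then none else some ((α : F)⁻¹ * β ^ (t.val - 1))))
    else
      (if fac = 0 then (if t.val = 0 then some 0 else some ((α : F)⁻¹ * β ^ (t.val - 1)))
       else (if t.val = 0 then none else some (β ^ (t.val - 1))))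

/-- The plan developed over `(F,+)` (`∞` fixed): `2v` blocks of size `f+1`. -/
def plan17 (F : Type*) [Field F] (f : ℕ) (α : Fˣ) :
    Fin 2 × F → Fin (f + 1) → Fin 2 → Option F :=
  fun blk t fac => (init17 F f α blk.1 t fac).map (· + blk.2)

section Aux
variable {F : Type*} [Field F] [Fintype F] [DecidableEq F] {f : ℕ} {α : Fˣ}

lemma aux_hf (hcard : Fintype.card F = 2 * f + 1) : 1 ≤ f := by
  have := Fintype.one_lt_card (α := F); omega

lemma aux_char2 (hcard : Fintype.card F = 2 * f + 1) : ringChar F ≠ 2 := by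
  intro h
  have := FiniteField.even_card_of_char_two h
  omega

lemma aux_order (hcard : Fintype.card F = 2 * f + 1)
    (hα : ∀ x : Fˣ, x ∈ Subgroup.zpowers α) : orderOf α = 2 * f := by
  have h := orderOf_eq_card_of_forall_mem_zpowers hα
  rw [Nat.card_eq_fintype_card, Fintype.card_units, hcard] at h
  omega

lemma aux_not_sq (hcard : Fintype.card F = 2 * f + 1)
    (hα : ∀ x : Fˣ, x ∈ Subgroup.zpowers α) : ¬ IsSquare ((α : Fˣ) : F) := by
  rintro ⟨y, hy⟩
  have hy0 : y ≠ 0 := by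
    rintro rfl
    exact α.ne_zero (by simpa using hy)
  lift y to Fˣ using hy0.isUnit with u
  have hα2 : α = u * u := Units.ext (by exact_mod_cast hy)
  obtain ⟨n, hn⟩ := hα u
  have hu : α ^ n = u := hn
  have h1 : α ^ (2 * n - 1 : ℤ) = 1 := by
    have h2n : α ^ (2 * n : ℤ) = α := by
      rw [two_mul, zpow_add, hu, ← hα2]
    rw [show (2 * n - 1 : ℤ) = 2 * n + (-1) by ring, zpow_add, h2n]
    simp
  have h2 : ((orderOf α : ℤ)) ∣ 2 * n - 1 := orderOf_dvd_iff_zpow_eq_one.mpr h1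
  rw [aux_order hcard hα] at h2
  obtain ⟨k, hk⟩ := h2
  have h3 : (2 : ℤ) ∣ 2 * n - 1 := ⟨(f : ℤ) * k, by push_cast at hk ⊢; linarith⟩
  omega

lemma aux_chi_alpha (hcard : Fintype.card F = 2 * f + 1)
    (hα : ∀ x : Fˣ, x ∈ Subgroup.zpowers α) : quadraticChar F ((α : Fˣ) : F) = -1 :=
  quadraticChar_neg_one_iff_not_isSquare.mpr (aux_not_sq hcard hα)

lemma aux_chi_alpha_inv (hcard : Fintype.card F = 2 * f + 1)
    (hα : ∀ x : Fˣ, x ∈ Subgroup.zpowers α) : quadraticChar F (((α : Fˣ) : F)⁻¹) = -1 := by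
  have h1 : quadraticChar F ((α : Fˣ) : F) * quadraticChar F (((α : Fˣ) : F)⁻¹) = 1 := by
    rw [← map_mul, mul_inv_cancel₀ α.ne_zero, map_one]
  rw [aux_chi_alpha hcard hα] at h1
  linarith

lemma aux_chi_neg_one (hcard : Fintype.card F = 2 * f + 1) :
    quadraticChar F (-1 : F) = if Even f then 1 else -1 := by
  by_cases hEf : Even f
  · obtain ⟨m, rfl⟩ := hEf
    have h4 : Fintype.card F % 4 ≠ 3 := by omega
    rw [if_pos ⟨m, rfl⟩]
    exact (quadraticChar_one_iff_isSquare (neg_ne_zero.mpr one_ne_zero)).mpr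
      (FiniteField.isSquare_neg_one_iff.mpr h4)
  · obtain ⟨m, rfl⟩ := Nat.not_even_iff_odd.mp hEf
    have h4 : Fintype.card F % 4 = 3 := by omega
    rw [if_neg hEf]
    exact quadraticChar_neg_one_iff_not_isSquare.mpr
      (fun hsq => (FiniteField.isSquare_neg_one_iff.mp hsq) h4)

lemma aux_chi_beta_pow (k : ℕ) : quadraticChar F (((α : Fˣ) : F) ^ 2) ^ k = 1 := by
  rw [quadraticChar_sq_one' α.ne_zero, one_pow]

lemma aux_chi_beta_pow' (k : ℕ) : quadraticChar F ((((α : Fˣ) : F) ^ 2) ^ k) = 1 := by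
  rw [← pow_mul, mul_comm, pow_mul, quadraticChar_sq_one' (pow_ne_zero k α.ne_zero)]

lemma aux_beta_order (hcard : Fintype.card F = 2 * f + 1)
    (hα : ∀ x : Fˣ, x ∈ Subgroup.zpowers α) : orderOf (α ^ 2) = f := by
  rw [orderOf_pow, aux_order hcard hα]
  have h2 : Nat.gcd (2 * f) 2 = 2 := by
    rw [Nat.gcd_comm]
    exact Nat.gcd_eq_left ⟨f, rfl⟩
  rw [h2]
  omega

lemma aux_mem (hcard : Fintype.card F = 2 * f + 1)
    (hα : ∀ x : Fˣ, x ∈ Subgroup.zpowers α) (z : F) :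
    quadraticChar F z = 1 ↔ ∃ k : Fin f, (((α : Fˣ) : F) ^ 2) ^ (k : ℕ) = z := by
  constructor
  · intro hz
    have hz0 : z ≠ 0 := fun h => by simp [h, quadraticChar_zero] at hz
    obtain ⟨y, hy⟩ := (quadraticChar_one_iff_isSquare hz0).mp hz
    have hy0 : y ≠ 0 := by rintro rfl; simp at hy; exact hz0 hy
    lift y to Fˣ using hy0.isUnit with u
    obtain ⟨n, hn⟩ := hα u
    have hu : α ^ n = u := hn
    have hf1 : 1 ≤ f := aux_hf hcard
    have hford : orderOf (α ^ 2) = f := aux_beta_order hcard hα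
    have hzu : z = ((α ^ 2 : Fˣ) ^ n : Fˣ) := by
      have : (α ^ 2 : Fˣ) ^ n = u * u := by
        rw [← hu, sq, mul_zpow]
      rw [this, Units.val_mul, ← hy]
    set m : ℤ := n % (f : ℤ) with hm
    have hm0 : 0 ≤ m := Int.emod_nonneg n (by exact_mod_cast (by omega : (f:ℕ) ≠ 0))
    have hmf : m < (f : ℤ) := Int.emod_lt_of_pos n (by exact_mod_cast hf1)
    have hmod : (α ^ 2 : Fˣ) ^ m = (α ^ 2 : Fˣ) ^ n := by
      rw [hm, ← hford]; exact zpow_mod_orderOf _ _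
    refine ⟨⟨m.toNat, by omega⟩, ?_⟩
    have h2 : (α ^ 2 : Fˣ) ^ (m.toNat) = (α ^ 2 : Fˣ) ^ n := by
      rw [← hmod, ← zpow_natCast (α ^ 2 : Fˣ), Int.toNat_of_nonneg hm0]
    rw [hzu, ← h2]
    push_cast
    ring
  · rintro ⟨k, rfl⟩
    exact aux_chi_beta_pow' _

lemma aux_sum_beta (hcard : Fintype.card F = 2 * f + 1)
    (hα : ∀ x : Fˣ, x ∈ Subgroup.zpowers α) {M : Type*} [AddCommMonoid M] (g : F → M) :
    ∑ k : Fin f, g ((((α : Fˣ) : F) ^ 2) ^ (k : ℕ))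
      = ∑ z : F, if quadraticChar F z = 1 then g z else 0 := by
  rw [← Finset.sum_filter]
  refine Finset.sum_nbij (fun k => (((α : Fˣ) : F) ^ 2) ^ (k : ℕ)) ?_ ?_ ?_ ?_
  · intro k _
    simp only [mem_filter, mem_univ, true_and]
    exact aux_chi_beta_pow' _
  · intro k _ l _ h
    have hford : orderOf (α ^ 2) = f := aux_beta_order hcard hα
    have h' : (α ^ 2 : Fˣ) ^ (k : ℕ) = (α ^ 2 : Fˣ) ^ (l : ℕ) := by
      ext; simpa using h
    have := pow_injOn_Iio_orderOf (x := α ^ 2)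
      (by rw [hford]; exact k.isLt) (by rw [hford]; exact l.isLt) h'
    exact Fin.ext this
  · intro z hz
    rw [Finset.mem_coe, Finset.mem_filter] at hz
    obtain ⟨k, hk⟩ := (aux_mem hcard hα z).mp hz.2
    exact ⟨k, Finset.mem_coe.mpr (Finset.mem_univ k), hk⟩
  · intro k _; rfl

lemma aux_chi_inv (z : F) : quadraticChar F z⁻¹ = quadraticChar F z := by
  by_cases hz : z = 0
  · simp [hz]
  · have h1 : quadraticChar F z * quadraticChar F z⁻¹ = 1 := by
      rw [← map_mul, mul_inv_cancel₀ hz, map_one]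
    rcases quadraticChar_dichotomy hz with h | h <;> rw [h] at h1 ⊢ <;> linarith

lemma aux_sum_chi_sq (hcard : Fintype.card F = 2 * f + 1) :
    ∑ z : F, (quadraticChar F z) ^ 2 = (Fintype.card F : ℤ) - 1 := by
  have hpt : ∀ z : F, (quadraticChar F z) ^ 2 = 1 - (if z = 0 then (1:ℤ) else 0) := by
    intro z
    by_cases hz : z = 0
    · simp [hz, quadraticChar_zero]
    · rw [quadraticChar_sq_one hz, if_neg hz]; ring
  rw [Finset.sum_congr rfl fun z _ => hpt z, Finset.sum_sub_distrib,
    Finset.sum_ite_eq' Finset.univ (0 : F) (fun _ => (1:ℤ))]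
  simp [Finset.card_univ]

lemma aux_sum_shift (hcard : Fintype.card F = 2 * f + 1) (c d : F) (hc : c ≠ 0) :
    ∑ z : F, quadraticChar F (c * z - d) = 0 := by
  have h := quadraticChar_sum_zero (F := F) (aux_char2 hcard)
  rw [← h]
  exact Fintype.sum_equiv ((Equiv.mulLeft₀ c hc).trans (Equiv.subRight d))
    (fun z => quadraticChar F (c * z - d)) (fun w => quadraticChar F w) (fun z => rfl)

lemma aux_sum_mul_shift (hcard : Fintype.card F = 2 * f + 1) (e : F) (he : e ≠ 0) :
    ∑ z : F, quadraticChar F z * quadraticChar F (z + e) = -1 := by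
  have hchi := quadraticChar_sum_zero (F := F) (aux_char2 hcard)
  have h1 : ∑ z : F, quadraticChar F z * quadraticChar F (z + e)
      = ∑ z ∈ Finset.univ.erase (0 : F), quadraticChar F z * quadraticChar F (z + e) := by
    rw [← Finset.add_sum_erase _ _ (Finset.mem_univ (0 : F)), quadraticChar_zero, zero_mul,
      zero_add]
  have h2 : ∑ z ∈ Finset.univ.erase (0 : F), quadraticChar F z * quadraticChar F (z + e)
      = ∑ w ∈ Finset.univ.erase (1 : F), quadraticChar F w := by
    refine Finset.sum_nbij' (i := fun z => 1 + e * z⁻¹) (j := fun w => e * (w - 1)⁻¹)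
      ?_ ?_ ?_ ?_ ?_
    · intro z hz
      rw [Finset.mem_erase] at hz ⊢
      refine ⟨?_, Finset.mem_univ _⟩
      intro hcon
      have : e * z⁻¹ = 0 := by
        have h' : (1 : F) + e * z⁻¹ = 1 := hcon
        simpa using h' 
      rcases mul_eq_zero.mp this with h | h
      · exact he h
      · exact hz.1 (inv_eq_zero.mp h)
    · intro w hw
      rw [Finset.mem_erase] at hw ⊢
      refine ⟨?_, Finset.mem_univ _⟩
      exact mul_ne_zero he (inv_ne_zero (sub_ne_zero.mpr hw.1))
    · intro z hz
      rw [Finset.mem_erase] at hz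
      field_simp
      rw [add_sub_cancel_left, div_div_cancel₀ he]
    · intro w hw
      rw [Finset.mem_erase] at hw
      have : w - 1 ≠ 0 := sub_ne_zero.mpr hw.1
      field_simp
      ring
    · intro z hz
      rw [Finset.mem_erase] at hz
      have hz0 : z ≠ 0 := hz.1
      have heq : 1 + e * z⁻¹ = z⁻¹ * (z + e) := by field_simp
      show _ = quadraticChar F (1 + e * z⁻¹)
      rw [heq, map_mul, aux_chi_inv]
  have h3 : ∑ w ∈ Finset.univ.erase (1 : F), quadraticChar F w = -1 := by
    have h4 := Finset.add_sum_erase Finset.univ (fun w => quadraticChar F w)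
      (Finset.mem_univ (1 : F))
    simp only [map_one] at h4
    rw [hchi] at h4
    linarith
  rw [h1, h2, h3]

lemma aux_tri (a : F) : quadraticChar F a = 0 ∨ quadraticChar F a = 1 ∨
    quadraticChar F a = -1 := by
  by_cases ha : a = 0
  · left; simp [ha, quadraticChar_zero]
  · right; exact quadraticChar_dichotomy ha

lemma aux_quad_ind (x y : ℤ) (hx : x = 0 ∨ x = 1 ∨ x = -1) (hy : y = 0 ∨ y = 1 ∨ y = -1) :
    (4 : ℤ) * (if x = 1 ∧ y = 1 then 1 else 0) = (x ^ 2 + x) * (y ^ 2 + y) := by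
  rcases hx with rfl | rfl | rfl <;> rcases hy with rfl | rfl | rfl <;> norm_num

lemma aux_master (hcard : Fintype.card F = 2 * f + 1) (c d : F) (hc : c ≠ 0) (hd : d ≠ 0) :
    (4 : ℤ) * ∑ z : F,
        (if quadraticChar F z = 1 ∧ quadraticChar F (c * z - d) = 1 then 1 else 0)
      = (Fintype.card F : ℤ) - 2 - quadraticChar F (-d) - quadraticChar F (c⁻¹ * d)
        - quadraticChar F c := by
  have hcd : c⁻¹ * d ≠ 0 := mul_ne_zero (inv_ne_zero hc) hd
  rw [Finset.mul_sum]
  have key : ∀ z : F,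
      (4 : ℤ) * (if quadraticChar F z = 1 ∧ quadraticChar F (c * z - d) = 1 then 1 else 0)
      = ((quadraticChar F z ^ 2 - (if z = c⁻¹ * d then 1 else 0))
        + (quadraticChar F (c * z - d) - (if z = 0 then quadraticChar F (-d) else 0))
        + (quadraticChar F z - (if z = c⁻¹ * d then quadraticChar F (c⁻¹ * d) else 0))
        + (quadraticChar F c * (quadraticChar F z * quadraticChar F (z + -(c⁻¹ * d))))) := by
    intro z
    rw [aux_quad_ind _ _ (aux_tri z) (aux_tri (c * z - d))]
    have ha : quadraticChar F z ^ 2 * quadraticChar F (c * z - d) ^ 2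
        = quadraticChar F z ^ 2 - (if z = c⁻¹ * d then 1 else 0) := by
      by_cases hz : z = c⁻¹ * d
      · have hw : c * z - d = 0 := by rw [hz]; field_simp; ring
        rw [hw, quadraticChar_zero, if_pos hz]
        have := quadraticChar_sq_one (F := F) hcd
        rw [hz, this]
        ring
      · have hw : c * z - d ≠ 0 := by
          intro h
          apply hz
          have h' : c * z = d := by linear_combination h
          rw [← h']
          field_simp
        rw [quadraticChar_sq_one hw, mul_one, if_neg hz, sub_zero]
    have hb : quadraticChar F z ^ 2 * quadraticChar F (c * z - d)
        = quadraticChar F (c * z - d) - (if z = 0 then quadraticChar F (-d) else 0) := by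
      by_cases hz : z = 0
      · subst hz
        have hw : c * 0 - d = -d := by ring
        rw [hw, quadraticChar_zero, if_pos rfl]
        ring
      · rw [quadraticChar_sq_one hz, one_mul, if_neg hz, sub_zero]
    have hcc : quadraticChar F z * quadraticChar F (c * z - d) ^ 2
        = quadraticChar F z - (if z = c⁻¹ * d then quadraticChar F (c⁻¹ * d) else 0) := by
      by_cases hz : z = c⁻¹ * d
      · have hw : c * z - d = 0 := by rw [hz]; field_simp; ring
        rw [hw, quadraticChar_zero, if_pos hz, hz]
        ring
      · have hw : c * z - d ≠ 0 := by
          intro h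
          apply hz
          have h' : c * z = d := by linear_combination h
          rw [← h']
          field_simp
        rw [quadraticChar_sq_one hw, mul_one, if_neg hz, sub_zero]
    have hd4 : quadraticChar F z * quadraticChar F (c * z - d)
        = quadraticChar F c * (quadraticChar F z * quadraticChar F (z + -(c⁻¹ * d))) := by
      have hw : c * z - d = c * (z + -(c⁻¹ * d)) := by field_simp; ring
      rw [hw, map_mul]
      ring
    linear_combination ha + hb + hcc + hd4
  rw [Finset.sum_congr rfl fun z _ => key z]
  rw [Finset.sum_add_distrib, Finset.sum_add_distrib, Finset.sum_add_distrib,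
    Finset.sum_sub_distrib, Finset.sum_sub_distrib, Finset.sum_sub_distrib]
  rw [aux_sum_chi_sq hcard, aux_sum_shift hcard c d hc,
    Finset.sum_ite_eq' Finset.univ (c⁻¹ * d) (fun _ => (1 : ℤ)),
    Finset.sum_ite_eq' Finset.univ (0 : F) (fun _ => quadraticChar F (-d)),
    Finset.sum_ite_eq' Finset.univ (c⁻¹ * d) (fun _ => quadraticChar F (c⁻¹ * d)),
    quadraticChar_sum_zero (aux_char2 hcard), ← Finset.mul_sum,
    aux_sum_mul_shift hcard (-(c⁻¹ * d)) (neg_ne_zero.mpr hcd)]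
  simp only [Finset.mem_univ, if_pos]
  ring

lemma aux_point {R : Type*} [AddCommMonoidWithOne R] (hcard : Fintype.card F = 2 * f + 1)
    (hα : ∀ x : Fˣ, x ∈ Subgroup.zpowers α) (x : F) :
    (∑ k : Fin f, if (((α : Fˣ) : F) ^ 2) ^ (k : ℕ) = x then (1 : R) else 0)
      = if quadraticChar F x = 1 then 1 else 0 := by
  rw [aux_sum_beta hcard hα (fun z => if z = x then (1 : R) else 0)]
  have hpt : ∀ z : F, (if quadraticChar F z = 1 then (if z = x then (1 : R) else 0) else 0)
      = if z = x then (if quadraticChar F x = 1 then (1 : R) else 0) else 0 := by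
    intro z
    by_cases hz : z = x
    · subst hz; simp
    · simp [hz]
  rw [Finset.sum_congr rfl fun z _ => hpt z, Finset.sum_ite_eq' Finset.univ x]
  simp

lemma aux_ind (x : F) (hx : x ≠ 0) :
    (4 : ℤ) * (if quadraticChar F x = 1 then 1 else 0) = 2 + 2 * quadraticChar F x := by
  rcases quadraticChar_dichotomy hx with h | h <;> rw [h] <;> norm_num

lemma aux_pairs (hcard : Fintype.card F = 2 * f + 1)
    (hα : ∀ x : Fˣ, x ∈ Subgroup.zpowers α) (c d : F) (hc : c ≠ 0) (hd : d ≠ 0) :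
    (4 : ℤ) * ∑ k : Fin f, ∑ l : Fin f,
        (if c * (((α : Fˣ) : F) ^ 2) ^ (l : ℕ) - (((α : Fˣ) : F) ^ 2) ^ (k : ℕ) = d
         then 1 else 0)
      = (Fintype.card F : ℤ) - 2 - quadraticChar F (-d) - quadraticChar F (c⁻¹ * d)
        - quadraticChar F c := by
  rw [Finset.sum_comm]
  have h1 : ∀ l : Fin f, (∑ k : Fin f,
      (if c * (((α : Fˣ) : F) ^ 2) ^ (l : ℕ) - (((α : Fˣ) : F) ^ 2) ^ (k : ℕ) = d
       then (1 : ℤ) else 0))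
      = if quadraticChar F (c * (((α : Fˣ) : F) ^ 2) ^ (l : ℕ) - d) = 1 then 1 else 0 := by
    intro l
    rw [← aux_point hcard hα (c * (((α : Fˣ) : F) ^ 2) ^ (l : ℕ) - d)]
    refine Finset.sum_congr rfl fun k _ => if_congr ?_ rfl rfl
    constructor <;> intro h <;> linear_combination -h
  rw [Finset.sum_congr rfl fun l _ => h1 l,
    aux_sum_beta hcard hα (fun z => if quadraticChar F (c * z - d) = 1 then (1 : ℤ) else 0)]
  rw [← aux_master hcard c d hc hd]
  congr 1
  refine Finset.sum_congr rfl fun z _ => ?_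
  by_cases h1 : quadraticChar F z = 1
  · by_cases h2 : quadraticChar F (c * z - d) = 1
    · rw [if_pos h1, if_pos h2, if_pos ⟨h1, h2⟩]
    · rw [if_pos h1, if_neg h2, if_neg (fun hh => h2 hh.2)]
  · rw [if_neg h1, if_neg (fun hh => h1 hh.1)]

lemma aux_pairs' (hcard : Fintype.card F = 2 * f + 1)
    (hα : ∀ x : Fˣ, x ∈ Subgroup.zpowers α) (c d : F) (hc : c ≠ 0) (hd : d ≠ 0) :
    (4 : ℤ) * ∑ k : Fin f, ∑ l : Fin f,
        (if (((α : Fˣ) : F) ^ 2) ^ (l : ℕ) - c * (((α : Fˣ) : F) ^ 2) ^ (k : ℕ) = d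
         then 1 else 0)
      = (Fintype.card F : ℤ) - 2 - quadraticChar F d - quadraticChar F (c⁻¹ * -d)
        - quadraticChar F c := by
  have h1 : ∀ k : Fin f, (∑ l : Fin f,
      (if (((α : Fˣ) : F) ^ 2) ^ (l : ℕ) - c * (((α : Fˣ) : F) ^ 2) ^ (k : ℕ) = d
       then (1 : ℤ) else 0))
      = if quadraticChar F (c * (((α : Fˣ) : F) ^ 2) ^ (k : ℕ) + d) = 1 then 1 else 0 := by
    intro k
    rw [← aux_point hcard hα (c * (((α : Fˣ) : F) ^ 2) ^ (k : ℕ) + d)]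
    refine Finset.sum_congr rfl fun l _ => if_congr ?_ rfl rfl
    constructor <;> intro h <;> linear_combination h
  rw [Finset.sum_congr rfl fun k _ => h1 k,
    aux_sum_beta hcard hα (fun z => if quadraticChar F (c * z + d) = 1 then (1 : ℤ) else 0)]
  have hmd : -d ≠ 0 := neg_ne_zero.mpr hd
  have := aux_master hcard c (-d) hc hmd
  rw [neg_neg] at this
  rw [← this]
  congr 1
  refine Finset.sum_congr rfl fun z _ => ?_
  have : c * z - -d = c * z + d := by ring
  rw [this]
  by_cases h1 : quadraticChar F z = 1
  · by_cases h2 : quadraticChar F (c * z + d) = 1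
    · rw [if_pos h1, if_pos h2, if_pos ⟨h1, h2⟩]
    · rw [if_pos h1, if_neg h2, if_neg (fun hh => h2 hh.2)]
  · rw [if_neg h1, if_neg (fun hh => h1 hh.1)]

lemma aux_x1 (b v : F) : (∑ x : F, if b + x = v then (1 : ℕ) else 0) = 1 := by
  have h : ∀ x : F, (if b + x = v then (1 : ℕ) else 0) = if x = v - b then 1 else 0 := by
    intro x
    refine if_congr ?_ rfl rfl
    constructor <;> intro h <;> linear_combination h
  rw [Finset.sum_congr rfl fun x _ => h x, Finset.sum_ite_eq' Finset.univ (v - b)]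
  simp

lemma aux_x2 (a b u v : F) : (∑ x : F, if a + x = u ∧ b + x = v then (1 : ℕ) else 0)
    = if b - a = v - u then 1 else 0 := by
  have h : ∀ x : F, (if a + x = u ∧ b + x = v then (1 : ℕ) else 0)
      = if b - a = v - u then (if x = u - a then 1 else 0) else 0 := by
    intro x
    by_cases hC : b - a = v - u
    · rw [if_pos hC]
      refine if_congr ?_ rfl rfl
      constructor
      · rintro ⟨h1, h2⟩; linear_combination h1
      · intro h1; exact ⟨by linear_combination h1, by linear_combination hC + h1⟩
    · rw [if_neg hC, if_neg]
      rintro ⟨h1, h2⟩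
      exact hC (by linear_combination h2 - h1)
  rw [Finset.sum_congr rfl fun x _ => h x]
  by_cases hC : b - a = v - u
  · rw [if_pos hC]
    simp only [hC, if_pos]
    rw [Finset.sum_ite_eq' Finset.univ (u - a)]
    simp
  · simp [hC]

end Aux

section Red
variable {F : Type*} [Field F] [Fintype F] [DecidableEq F] {f : ℕ} {α : Fˣ}

lemma init17_e00 : init17 F f α 0 0 0 = none := by simp [init17]

lemma init17_es0 (k : Fin f) :
    init17 F f α 0 k.succ 0 = some ((((α : Fˣ) : F) ^ 2) ^ (k : ℕ)) := by
  simp [init17]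

lemma init17_e01 : init17 F f α 0 0 1 = some 0 := by simp [init17]

lemma init17_es1 (k : Fin f) :
    init17 F f α 0 k.succ 1 = some (((α : Fˣ) : F) * (((α : Fˣ) : F) ^ 2) ^ (k : ℕ)) := by
  simp [init17]

lemma init17_f00_even (h : Even f) : init17 F f α 1 0 0 = some 0 := by simp [init17, h]

lemma init17_fs0_even (h : Even f) (k : Fin f) :
    init17 F f α 1 k.succ 0 = some ((((α : Fˣ) : F) ^ 2) ^ (k : ℕ)) := by
  simp [init17, h]

lemma init17_f01_even (h : Even f) : init17 F f α 1 0 1 = none := by simp [init17, h]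

lemma init17_fs1_even (h : Even f) (k : Fin f) :
    init17 F f α 1 k.succ 1 = some (((α : Fˣ) : F)⁻¹ * (((α : Fˣ) : F) ^ 2) ^ (k : ℕ)) := by
  simp [init17, h]

lemma init17_f00_odd (h : ¬ Even f) : init17 F f α 1 0 0 = some 0 := by simp [init17, h]

lemma init17_fs0_odd (h : ¬ Even f) (k : Fin f) :
    init17 F f α 1 k.succ 0 = some (((α : Fˣ) : F)⁻¹ * (((α : Fˣ) : F) ^ 2) ^ (k : ℕ)) := by
  simp [init17, h]

lemma init17_f01_odd (h : ¬ Even f) : init17 F f α 1 0 1 = none := by simp [init17, h]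

lemma init17_fs1_odd (h : ¬ Even f) (k : Fin f) :
    init17 F f α 1 k.succ 1 = some ((((α : Fˣ) : F) ^ 2) ^ (k : ℕ)) := by
  simp [init17, h]

lemma aux_c0 (v : F) : (Finset.univ.filter fun x : F => x = v).card = 1 := by
  rw [Finset.filter_eq']
  simp

lemma aux_c1 (b v : F) : (Finset.univ.filter fun x : F => b + x = v).card = 1 := by
  have h : ∀ x : F, (b + x = v) = (x = v - b) := by
    intro x
    apply propext
    constructor <;> intro h <;> linear_combination h
  simp only [h]
  exact aux_c0 _

lemma aux_c2 (a b u v : F) : (Finset.univ.filter fun x : F => a + x = u ∧ b + x = v).card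
    = if b - a = v - u then 1 else 0 := by
  by_cases hC : b - a = v - u
  · rw [if_pos hC]
    have h : ∀ x : F, (a + x = u ∧ b + x = v) = (x = u - a) := by
      intro x; apply propext
      constructor
      · rintro ⟨h1, h2⟩; linear_combination h1
      · intro h1; exact ⟨by linear_combination h1, by linear_combination hC + h1⟩
    simp only [h]
    exact aux_c0 _
  · rw [if_neg hC, Finset.card_eq_zero, Finset.filter_eq_empty_iff]
    rintro x - ⟨h1, h2⟩
    exact hC (by linear_combination h2 - h1)

lemma aux_c2B (a u v : F) : (Finset.univ.filter fun x : F => a + x = u ∧ x = v).card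
    = if a = u - v then 1 else 0 := by
  have h : ∀ x : F, (a + x = u ∧ x = v) = (a = u - v ∧ x = v) := by
    intro x; apply propext
    constructor
    · rintro ⟨h1, h2⟩; exact ⟨by linear_combination h1 - h2, h2⟩
    · rintro ⟨h1, h2⟩; exact ⟨by linear_combination h1 + h2, h2⟩
  simp only [h]
  by_cases hC : a = u - v
  · simp only [hC, true_and, if_pos rfl]
    exact aux_c0 _
  · simp [hC]

lemma aux_c2C (b u v : F) : (Finset.univ.filter fun x : F => x = u ∧ b + x = v).card
    = if b = v - u then 1 else 0 := by
  have h : ∀ x : F, (x = u ∧ b + x = v) = (b = v - u ∧ x = u) := by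
    intro x; apply propext
    constructor
    · rintro ⟨h1, h2⟩; exact ⟨by linear_combination h2 - h1, h1⟩
    · rintro ⟨h1, h2⟩; exact ⟨h2, by linear_combination h1 + h2⟩
  simp only [h]
  by_cases hC : b = v - u
  · simp only [hC, true_and, if_pos rfl]
    exact aux_c0 _
  · simp [hC]


lemma aux_S (p q : Option F) :
    ∑ blk : Fin 2 × F, MB (plan17 F f α) 0 p blk * MB (plan17 F f α) 1 q blk
    = ∑ i : Fin 2, ∑ t : Fin (f + 1), ∑ t' : Fin (f + 1), ∑ x : F,
        (if (init17 F f α i t 0).map (· + x) = p ∧ (init17 F f α i t' 1).map (· + x) = q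
         then 1 else 0) := by
  have h1 : ∀ (i : Fin 2) (x : F),
      MB (plan17 F f α) 0 p (i, x) * MB (plan17 F f α) 1 q (i, x)
      = ∑ t : Fin (f + 1), ∑ t' : Fin (f + 1),
          (if (init17 F f α i t 0).map (· + x) = p ∧ (init17 F f α i t' 1).map (· + x) = q
           then 1 else 0) := by
    intro i x
    rw [MB, MB, Finset.card_filter, Finset.card_filter, Finset.sum_mul_sum]
    refine Finset.sum_congr rfl fun t _ => Finset.sum_congr rfl fun t' _ => ?_
    rw [ite_zero_mul_ite_zero, one_mul]
    rfl
  rw [Fintype.sum_prod_type]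
  refine Finset.sum_congr rfl fun i _ => ?_
  rw [Finset.sum_congr rfl fun x _ => h1 i x, Finset.sum_comm]
  exact Finset.sum_congr rfl fun t _ => Finset.sum_comm

end Red

section Main
variable {F : Type*} [Field F] [Fintype F] [DecidableEq F] {f : ℕ} {α : Fˣ}

lemma aux_ne_mix (c : F) (hc : quadraticChar F c = -1) (k l : Fin f) :
    c * (((α : Fˣ) : F) ^ 2) ^ (l : ℕ) - (((α : Fˣ) : F) ^ 2) ^ (k : ℕ) ≠ 0 := by
  intro h
  have h2 : c * (((α : Fˣ) : F) ^ 2) ^ (l : ℕ) = (((α : Fˣ) : F) ^ 2) ^ (k : ℕ) := by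
    linear_combination h
  have h3 := congrArg (quadraticChar F) h2
  rw [map_mul, aux_chi_beta_pow' (α := α), aux_chi_beta_pow' (α := α), mul_one] at h3
  rw [h3] at hc
  norm_num at hc

lemma aux_point2 {R : Type*} [AddCommMonoidWithOne R] (hcard : Fintype.card F = 2 * f + 1)
    (hα : ∀ x : Fˣ, x ∈ Subgroup.zpowers α) (c d : F) (hc : c ≠ 0) :
    (∑ l : Fin f, if c * (((α : Fˣ) : F) ^ 2) ^ (l : ℕ) = d then (1 : R) else 0)
    = if quadraticChar F (c⁻¹ * d) = 1 then 1 else 0 := by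
  rw [← aux_point hcard hα (c⁻¹ * d)]
  refine Finset.sum_congr rfl fun l _ => if_congr ?_ rfl rfl
  constructor
  · intro h; rw [← h]; field_simp
  · intro h; rw [h]; field_simp

lemma aux_ss_even (hcard : Fintype.card F = 2 * f + 1)
    (hα : ∀ x : Fˣ, x ∈ Subgroup.zpowers α) (hEf : Even f) (u v : F) :
    ∑ i : Fin 2, ∑ t : Fin (f + 1), ∑ t' : Fin (f + 1), ∑ x : F,
        (if (init17 F f α i t 0).map (· + x) = some u
          ∧ (init17 F f α i t' 1).map (· + x) = some v
         then 1 else 0) = if u = v then 0 else f + 1 := by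
  simp [Fin.sum_univ_two, Fin.sum_univ_succ, init17, hEf, aux_c2, aux_c2B, aux_c2C]
  simp only [Finset.card_filter]
  by_cases huv : u = v
  · subst huv
    rw [if_pos rfl, sub_self]
    have h1 : ∀ k : Fin f, (if (((α : Fˣ) : F) ^ 2) ^ (k : ℕ) = (0 : F) then (1 : ℕ) else 0)
        = 0 := fun k => if_neg (pow_ne_zero _ (pow_ne_zero _ α.ne_zero))
    have h2 : ∀ k l : Fin f,
        (if ((α : Fˣ) : F) * (((α : Fˣ) : F) ^ 2) ^ (l : ℕ) - (((α : Fˣ) : F) ^ 2) ^ (k : ℕ)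
          = (0 : F) then (1 : ℕ) else 0) = 0 :=
      fun k l => if_neg (aux_ne_mix _ (aux_chi_alpha hcard hα) k l)
    have h3 : ∀ l : Fin f, (if ((α : Fˣ) : F)⁻¹ * (((α : Fˣ) : F) ^ 2) ^ (l : ℕ) = (0 : F)
        then (1 : ℕ) else 0) = 0 :=
      fun l => if_neg (mul_ne_zero (inv_ne_zero α.ne_zero)
        (pow_ne_zero _ (pow_ne_zero _ α.ne_zero)))
    have h4 : ∀ k l : Fin f,
        (if ((α : Fˣ) : F)⁻¹ * (((α : Fˣ) : F) ^ 2) ^ (l : ℕ) - (((α : Fˣ) : F) ^ 2) ^ (k : ℕ)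
          = (0 : F) then (1 : ℕ) else 0) = 0 :=
      fun k l => if_neg (aux_ne_mix _ (aux_chi_alpha_inv hcard hα) k l)
    simp only [h1, h2, h3, h4, Finset.sum_const_zero, add_zero, zero_add]
  · rw [if_neg huv]
    rw [Finset.sum_add_distrib]
    have hd : v - u ≠ 0 := sub_ne_zero.mpr (Ne.symm huv)
    have hd' : u - v ≠ 0 := sub_ne_zero.mpr huv
    have hzify : ∀ A B C D : ℕ, ((A:ℤ) + B + (C + D) = (f:ℤ) + 1) → (A + B + (C + D) = f + 1) := by
      intro A B C D h
      exact_mod_cast h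
    apply hzify
    push_cast
    apply mul_left_cancel₀ (a := (4 : ℤ)) (by norm_num)
    rw [mul_add, mul_add, mul_add]
    rw [aux_point hcard hα (u - v), aux_ind _ hd']
    rw [aux_pairs hcard hα ((α : Fˣ) : F) (v - u) α.ne_zero hd]
    rw [aux_point2 hcard hα _ _ (inv_ne_zero α.ne_zero), inv_inv,
      aux_ind _ (mul_ne_zero α.ne_zero hd)]
    rw [aux_pairs hcard hα (((α : Fˣ) : F))⁻¹ (v - u) (inv_ne_zero α.ne_zero) hd, inv_inv]
    have hm1 : quadraticChar F (-(v - u)) = quadraticChar F (v - u) := by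
      rw [show -(v - u) = -1 * (v - u) by ring, map_mul, aux_chi_neg_one hcard, if_pos hEf,
        one_mul]
    have hm2 : quadraticChar F (u - v) = quadraticChar F (v - u) := by
      rw [show u - v = -(v - u) by ring]; exact hm1
    have hm3 : quadraticChar F (((α : Fˣ) : F)⁻¹ * (v - u)) = - quadraticChar F (v - u) := by
      rw [map_mul, aux_chi_alpha_inv hcard hα]; ring
    have hm4 : quadraticChar F (((α : Fˣ) : F) * (v - u)) = - quadraticChar F (v - u) := by
      rw [map_mul, aux_chi_alpha hcard hα]; ring
    rw [hm1, hm2, hm3, hm4, aux_chi_alpha hcard hα, aux_chi_alpha_inv hcard hα, hcard]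
    push_cast
    ring

lemma aux_ne_mix' (c : F) (hc : quadraticChar F c = -1) (k l : Fin f) :
    (((α : Fˣ) : F) ^ 2) ^ (l : ℕ) - c * (((α : Fˣ) : F) ^ 2) ^ (k : ℕ) ≠ 0 := by
  intro h
  have h2 : c * (((α : Fˣ) : F) ^ 2) ^ (k : ℕ) = (((α : Fˣ) : F) ^ 2) ^ (l : ℕ) := by
    linear_combination -h
  have h3 := congrArg (quadraticChar F) h2
  rw [map_mul, aux_chi_beta_pow' (α := α), aux_chi_beta_pow' (α := α), mul_one] at h3
  rw [h3] at hc
  norm_num at hc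

lemma aux_ss_odd (hcard : Fintype.card F = 2 * f + 1)
    (hα : ∀ x : Fˣ, x ∈ Subgroup.zpowers α) (hEf : ¬ Even f) (u v : F) :
    ∑ i : Fin 2, ∑ t : Fin (f + 1), ∑ t' : Fin (f + 1), ∑ x : F,
        (if (init17 F f α i t 0).map (· + x) = some u
          ∧ (init17 F f α i t' 1).map (· + x) = some v
         then 1 else 0) = if u = v then 0 else f + 1 := by
  simp [Fin.sum_univ_two, Fin.sum_univ_succ, init17, hEf, aux_c2, aux_c2B, aux_c2C]
  simp only [Finset.card_filter]
  by_cases huv : u = v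
  · subst huv
    rw [if_pos rfl, sub_self]
    have h1 : ∀ k : Fin f, (if (((α : Fˣ) : F) ^ 2) ^ (k : ℕ) = (0 : F) then (1 : ℕ) else 0)
        = 0 := fun k => if_neg (pow_ne_zero _ (pow_ne_zero _ α.ne_zero))
    have h2 : ∀ k l : Fin f,
        (if ((α : Fˣ) : F) * (((α : Fˣ) : F) ^ 2) ^ (l : ℕ) - (((α : Fˣ) : F) ^ 2) ^ (k : ℕ)
          = (0 : F) then (1 : ℕ) else 0) = 0 :=
      fun k l => if_neg (aux_ne_mix _ (aux_chi_alpha hcard hα) k l)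
    have h3 : ∀ k : Fin f, (if ((α : Fˣ) : F)⁻¹ * (((α : Fˣ) : F) ^ 2) ^ (k : ℕ) = (0 : F)
        then (1 : ℕ) else 0) = 0 :=
      fun k => if_neg (mul_ne_zero (inv_ne_zero α.ne_zero)
        (pow_ne_zero _ (pow_ne_zero _ α.ne_zero)))
    have h4 : ∀ k l : Fin f,
        (if (((α : Fˣ) : F) ^ 2) ^ (l : ℕ) - ((α : Fˣ) : F)⁻¹ * (((α : Fˣ) : F) ^ 2) ^ (k : ℕ)
          = (0 : F) then (1 : ℕ) else 0) = 0 :=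
      fun k l => if_neg (aux_ne_mix' _ (aux_chi_alpha_inv hcard hα) k l)
    simp only [h1, h2, h3, h4, Finset.sum_const_zero, add_zero, zero_add]
  · rw [if_neg huv]
    rw [Finset.sum_add_distrib]
    have hd : v - u ≠ 0 := sub_ne_zero.mpr (Ne.symm huv)
    have hd' : u - v ≠ 0 := sub_ne_zero.mpr huv
    have hzify : ∀ A B C D : ℕ, ((A:ℤ) + B + (C + D) = (f:ℤ) + 1) → (A + B + (C + D) = f + 1) := by
      intro A B C D h
      exact_mod_cast h
    apply hzify
    push_cast
    apply mul_left_cancel₀ (a := (4 : ℤ)) (by norm_num)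
    rw [mul_add, mul_add, mul_add]
    rw [aux_point hcard hα (u - v), aux_ind _ hd']
    rw [aux_pairs hcard hα ((α : Fˣ) : F) (v - u) α.ne_zero hd]
    rw [aux_point hcard hα (v - u), aux_ind _ hd]
    rw [aux_pairs' hcard hα (((α : Fˣ) : F))⁻¹ (v - u) (inv_ne_zero α.ne_zero) hd, inv_inv]
    have hm4 : quadraticChar F (((α : Fˣ) : F) * (v - u)) = - quadraticChar F (v - u) := by
      rw [map_mul, aux_chi_alpha hcard hα]; ring
    have hm1 : quadraticChar F (-(v - u)) = - quadraticChar F (v - u) := by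
      rw [show -(v - u) = -1 * (v - u) by ring, map_mul, aux_chi_neg_one hcard, if_neg hEf]
      ring
    have hm2 : quadraticChar F (u - v) = - quadraticChar F (v - u) := by
      rw [show u - v = -(v - u) by ring]; exact hm1
    have hm3 : quadraticChar F (((α : Fˣ) : F)⁻¹ * (v - u)) = - quadraticChar F (v - u) := by
      rw [map_mul, aux_chi_alpha_inv hcard hα]; ring
    have hm5 : quadraticChar F (((α : Fˣ) : F) * -(v - u)) = quadraticChar F (v - u) := by
      rw [show ((α : Fˣ) : F) * -(v - u) = -1 * (((α : Fˣ) : F) * (v - u)) by ring, map_mul,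
        aux_chi_neg_one hcard, if_neg hEf, hm4]
      ring
    rw [hm1, hm2, hm3, hm5, aux_chi_alpha hcard hα, aux_chi_alpha_inv hcard hα, hcard]
    push_cast
    ring

lemma aux_S2 (p q : Option F) :
    Mff (plan17 F f α) 0 1 p q
    = ∑ i : Fin 2, ∑ t : Fin (f + 1), ∑ x : F,
        (if (init17 F f α i t 0).map (· + x) = p ∧ (init17 F f α i t 1).map (· + x) = q
         then 1 else 0) := by
  rw [Mff, Finset.card_filter, Fintype.sum_prod_type, Fintype.sum_prod_type]
  refine Finset.sum_congr rfl fun i _ => ?_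
  rw [Finset.sum_comm]
  exact Finset.sum_congr rfl fun t _ => Finset.sum_congr rfl fun x _ => rfl

lemma aux_alpha_ne_one (hcard : Fintype.card F = 2 * f + 1)
    (hα : ∀ x : Fˣ, x ∈ Subgroup.zpowers α) : ((α : Fˣ) : F) ≠ 1 := by
  intro h
  have h2 : α = 1 := Units.ext (by simpa using h)
  have h3 := aux_order hcard hα
  rw [h2, orderOf_one] at h3
  have := aux_hf hcard
  omega

lemma aux_bullet1 (hcard : Fintype.card F = 2 * f + 1)
    (hα : ∀ x : Fˣ, x ∈ Subgroup.zpowers α) (p q : Option F) :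
    ∑ blk : Fin 2 × F, MB (plan17 F f α) 0 p blk * MB (plan17 F f α) 1 q blk
      = if p = q then 0 else f + 1 := by
  rw [aux_S]
  rcases p with _ | u <;> rcases q with _ | v
  · rw [if_pos rfl]
    by_cases hEf : Even f <;>
      simp [Fin.sum_univ_two, Fin.sum_univ_succ, init17, hEf]
  · rw [if_neg (by simp)]
    by_cases hEf : Even f <;>
      simp [Fin.sum_univ_two, Fin.sum_univ_succ, init17, hEf, aux_c0, aux_c1] <;> omega
  · rw [if_neg (by simp)]
    by_cases hEf : Even f <;>
      simp [Fin.sum_univ_two, Fin.sum_univ_succ, init17, hEf, aux_c0, aux_c1] <;> omega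
  · rw [show (if (some u : Option F) = some v then 0 else f + 1)
        = if u = v then 0 else f + 1 by simp]
    by_cases hEf : Even f
    · exact aux_ss_even hcard hα hEf u v
    · exact aux_ss_odd hcard hα hEf u v

lemma aux_Mff (hcard : Fintype.card F = 2 * f + 1)
    (hα : ∀ x : Fˣ, x ∈ Subgroup.zpowers α) (p q : Option F) :
    Mff (plan17 F f α) 0 1 p q = if p = q then 0 else 1 := by
  have hane : ((α : Fˣ) : F) - 1 ≠ 0 := sub_ne_zero.mpr (aux_alpha_ne_one hcard hα)
  have haine : ((α : Fˣ) : F)⁻¹ - 1 ≠ 0 := by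
    intro h
    have : ((α : Fˣ) : F)⁻¹ = 1 := by linear_combination h
    have h2 : ((α : Fˣ) : F) = 1 := by
      field_simp at this
      simp [this]
    exact aux_alpha_ne_one hcard hα h2
  have haine' : 1 - ((α : Fˣ) : F)⁻¹ ≠ 0 := fun h => haine (by linear_combination -h)
  rw [aux_S2]
  rcases p with _ | u <;> rcases q with _ | v
  · rw [if_pos rfl]
    by_cases hEf : Even f <;>
      simp [Fin.sum_univ_two, Fin.sum_univ_succ, init17, hEf]
  · rw [if_neg (by simp)]
    by_cases hEf : Even f <;>
      simp [Fin.sum_univ_two, Fin.sum_univ_succ, init17, hEf, aux_c0, aux_c1]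
  · rw [if_neg (by simp)]
    by_cases hEf : Even f <;>
      simp [Fin.sum_univ_two, Fin.sum_univ_succ, init17, hEf, aux_c0, aux_c1]
  · rw [show (if (some u : Option F) = some v then 0 else 1)
        = if u = v then (0:ℕ) else 1 by simp]
    have hc2 : ∀ c : F, c ≠ 0 →
        quadraticChar F (c * (((α : Fˣ) : F) - 1)) = -1 →
        ((∑ k : Fin f, if c * (((α : Fˣ) : F) ^ 2) ^ (k : ℕ) = v - u then (1:ℕ) else 0)
          + ∑ k : Fin f,
            if (((α : Fˣ) : F) - 1) * (((α : Fˣ) : F) ^ 2) ^ (k : ℕ) = v - u then (1:ℕ) else 0)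
        = if u = v then 0 else 1 := by
      intro c hc hcs
      rw [aux_point2 hcard hα c (v - u) hc,
        aux_point2 hcard hα (((α : Fˣ) : F) - 1) (v - u) hane]
      by_cases huv : u = v
      · subst huv
        rw [if_pos rfl, sub_self, mul_zero, mul_zero, quadraticChar_zero]
        norm_num
      · rw [if_neg huv]
        have hd : v - u ≠ 0 := sub_ne_zero.mpr (Ne.symm huv)
        have he1 : c⁻¹ * (v - u) ≠ 0 := mul_ne_zero (inv_ne_zero hc) hd
        have he2 : (((α : Fˣ) : F) - 1)⁻¹ * (v - u) ≠ 0 :=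
          mul_ne_zero (inv_ne_zero hane) hd
        have hprod : quadraticChar F (c⁻¹ * (v - u))
            * quadraticChar F ((((α : Fˣ) : F) - 1)⁻¹ * (v - u)) = -1 := by
          rw [map_mul, map_mul, aux_chi_inv, aux_chi_inv]
          have : quadraticChar F c * quadraticChar F (v - u)
              * (quadraticChar F (((α : Fˣ) : F) - 1) * quadraticChar F (v - u))
              = quadraticChar F c * quadraticChar F (((α : Fˣ) : F) - 1)
                * (quadraticChar F (v - u) * quadraticChar F (v - u)) := by ring
          rw [this, ← map_mul (quadraticChar F) (v - u), ← pow_two,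
            quadraticChar_sq_one' hd, mul_one, ← map_mul, hcs]
        rcases quadraticChar_dichotomy he1 with h1 | h1 <;>
          rcases quadraticChar_dichotomy he2 with h2 | h2 <;>
          rw [h1, h2] at hprod ⊢ <;> norm_num at hprod <;> norm_num
    by_cases hEf : Even f
    · simp [Fin.sum_univ_two, Fin.sum_univ_succ, init17, hEf, aux_c2]
      simp only [Finset.card_filter]
      have g1 : ∀ k : Fin f,
          (if ((α : Fˣ) : F) * (((α : Fˣ) : F) ^ 2) ^ (k : ℕ) - (((α : Fˣ) : F) ^ 2) ^ (k : ℕ)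
            = v - u then (1:ℕ) else 0)
          = (if (((α : Fˣ) : F) - 1) * (((α : Fˣ) : F) ^ 2) ^ (k : ℕ) = v - u
             then (1:ℕ) else 0) := fun k =>
        if_congr ⟨fun h => by linear_combination h, fun h => by linear_combination h⟩ rfl rfl
      have g2 : ∀ k : Fin f,
          (if ((α : Fˣ) : F)⁻¹ * (((α : Fˣ) : F) ^ 2) ^ (k : ℕ) - (((α : Fˣ) : F) ^ 2) ^ (k : ℕ)
            = v - u then (1:ℕ) else 0)
          = (if (((α : Fˣ) : F)⁻¹ - 1) * (((α : Fˣ) : F) ^ 2) ^ (k : ℕ) = v - u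
             then (1:ℕ) else 0) := fun k =>
        if_congr ⟨fun h => by linear_combination h, fun h => by linear_combination h⟩ rfl rfl
      rw [Finset.sum_congr rfl fun k _ => g1 k, Finset.sum_congr rfl fun k _ => g2 k, add_comm]
      refine hc2 _ haine ?_
      have hid : (((α : Fˣ) : F)⁻¹ - 1) * (((α : Fˣ) : F) - 1)
          = -1 * (((α : Fˣ) : F)⁻¹ * (((α : Fˣ) : F) - 1) ^ 2) := by
        field_simp
        ring
      rw [hid, map_mul, map_mul, aux_chi_neg_one hcard, if_pos hEf,
        aux_chi_alpha_inv hcard hα, quadraticChar_sq_one' hane]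
      ring
    · simp [Fin.sum_univ_two, Fin.sum_univ_succ, init17, hEf, aux_c2]
      simp only [Finset.card_filter]
      have g1 : ∀ k : Fin f,
          (if ((α : Fˣ) : F) * (((α : Fˣ) : F) ^ 2) ^ (k : ℕ) - (((α : Fˣ) : F) ^ 2) ^ (k : ℕ)
            = v - u then (1:ℕ) else 0)
          = (if (((α : Fˣ) : F) - 1) * (((α : Fˣ) : F) ^ 2) ^ (k : ℕ) = v - u
             then (1:ℕ) else 0) := fun k =>
        if_congr ⟨fun h => by linear_combination h, fun h => by linear_combination h⟩ rfl rfl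
      have g2 : ∀ k : Fin f,
          (if (((α : Fˣ) : F) ^ 2) ^ (k : ℕ) - ((α : Fˣ) : F)⁻¹ * (((α : Fˣ) : F) ^ 2) ^ (k : ℕ)
            = v - u then (1:ℕ) else 0)
          = (if (1 - ((α : Fˣ) : F)⁻¹) * (((α : Fˣ) : F) ^ 2) ^ (k : ℕ) = v - u
             then (1:ℕ) else 0) := fun k =>
        if_congr ⟨fun h => by linear_combination h, fun h => by linear_combination h⟩ rfl rfl
      rw [Finset.sum_congr rfl fun k _ => g1 k, Finset.sum_congr rfl fun k _ => g2 k, add_comm]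
      refine hc2 _ haine' ?_
      have hid : (1 - ((α : Fˣ) : F)⁻¹) * (((α : Fˣ) : F) - 1)
          = ((α : Fˣ) : F)⁻¹ * (((α : Fˣ) : F) - 1) ^ 2 := by
        field_simp
      rw [hid, map_mul, aux_chi_alpha_inv hcard hα, quadraticChar_sq_one' hane]
      ring

end Main


theorem stmt18 (F : Type*) [Field F] [Fintype F] [DecidableEq F] (f : ℕ)
    (hcard : Fintype.card F = 2 * f + 1)
    (α : Fˣ) (hα : ∀ x : Fˣ, x ∈ Subgroup.zpowers α) :
    -- A = M₁B·M₂Bᵀ = (f+1)(J − I) ...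
    (∀ p q : Option F,
      ∑ blk : Fin 2 × F, MB (plan17 F f α) 0 p blk * MB (plan17 F f α) 1 q blk
        = if p = q then 0 else f + 1) ∧
    -- ... hence the plan is orthogonal through the block factor
    (∀ p q : Option F,
      ∑ blk : Fin 2 × F, MB (plan17 F f α) 0 p blk * MB (plan17 F f α) 1 q blk
        = (f + 1) * Mff (plan17 F f α) 0 1 p q) := by
  constructor
  · exact aux_bullet1 hcard hα
  · intro p q
    rw [aux_bullet1 hcard hα p q, aux_Mff hcard hα p q]
    by_cases h : p = q <;> simp [h]
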